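/- Consider the closed-loop SRB system with the storage function V = (1/2) vᵀ M_d v + (1/2) k_p ‖p_e‖² + 2 k_o (1 − η_e), and assume additionally that D_d is constant symmetric positive definite, that η_e(t) ≤ 1 for all t (so V ≥ 0), and that the human force has bounded energy, i.e., ∫₀^∞ ‖F_h(t)‖² dt = E < ∞. Then for all t ≥ 0 one has V(t) ≤ V(0) + (λ_max(D_d⁻¹)/4) E < ∞; consequently ‖v(t)‖, ‖p_e(t)‖ and 1 − η_e(t) are uniformly bounded on [0, ∞), i.e., the pose deviation between the robot end-effector and the god-object remains bounded (Theorem 1, statement 2). -/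

import Mathlib

/-!
Along solutions the coupling power `vᵀ u_c` of the controller is cancelled exactly by the rates of
the potential terms `½ k_p ‖p_e‖²` and `2 k_o (1 − η_e)`, so
`V̇ = vᵀ F_h − vᵀ D_d v − k_r f (k_p ‖p_e‖² + k_o ‖ε_e‖²)`.
Completing the square, `vᵀ F_h − vᵀ D_d v ≤ ¼ F_hᵀ D_d⁻¹ F_h ≤ (λ_max(D_d⁻¹)/4) ‖F_h‖²`, and
integrating this from `0` to `t` bounds `V(t)`. As `M_d ≻ 0` and `η_e ≤ 1`, the three terms of `V`
are nonnegative, so each of them is bounded by the same constant.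
-/

open Matrix

section Calculus

variable {ι : Type*} [Fintype ι] {u w : ℝ → ι → ℝ} {u' w' : ι → ℝ} {t : ℝ}

theorem HasDerivAt.dotProduct (hu : HasDerivAt u u' t) (hw : HasDerivAt w w' t) :
    HasDerivAt (fun s => u s ⬝ᵥ w s) (u' ⬝ᵥ w t + u t ⬝ᵥ w') t := by
  have h : HasDerivAt (fun s => ∑ i, u s i * w s i) (∑ i, (u' i * w t i + u t i * w' i)) t :=
    HasDerivAt.fun_sum fun i _ => (hasDerivAt_pi.mp hu i).mul (hasDerivAt_pi.mp hw i)
  simpa only [_root_.dotProduct, Finset.sum_add_distrib] using h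

theorem HasDerivAt.mulVec {κ : Type*} (M : Matrix κ ι ℝ) (hw : HasDerivAt w w' t) :
    HasDerivAt (fun s => M *ᵥ w s) (M *ᵥ w') t :=
  hasDerivAt_pi.mpr fun i => by
    simpa only [Matrix.mulVec, zero_dotProduct, zero_add] using
      (hasDerivAt_const t (M i)).dotProduct hw

end Calculus

theorem Fin.append_dotProduct_append {m n : ℕ} (a c : Fin m → ℝ) (b d : Fin n → ℝ) :
    Fin.append a b ⬝ᵥ Fin.append c d = a ⬝ᵥ c + b ⬝ᵥ d := by
  simp only [dotProduct, Fin.sum_univ_add, Fin.append_left, Fin.append_right]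

namespace Matrix

variable {n : Type*} [Fintype n] [DecidableEq n]

theorem IsHermitian.exists_dotProduct_mulVec_eq_sum_eigenvalues {A : Matrix n n ℝ}
    (hA : A.IsHermitian) (x : n → ℝ) :
    ∃ y : n → ℝ, x ⬝ᵥ A *ᵥ x = ∑ i, hA.eigenvalues i * (y i * y i) ∧ y ⬝ᵥ y = x ⬝ᵥ x := by
  have hA' := hA.spectral_theorem
  rw [Unitary.conjStarAlgAut_apply] at hA'
  have hU : (hA.eigenvectorUnitary : Matrix n n ℝ) * star (hA.eigenvectorUnitary : Matrix n n ℝ) =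
      1 :=
    mem_unitaryGroup_iff.mp hA.eigenvectorUnitary.2
  generalize (hA.eigenvectorUnitary : Matrix n n ℝ) = U at hA' hU
  rw [star_eq_conjTranspose, conjTranspose_eq_transpose_of_trivial] at hA' hU
  refine ⟨Uᵀ *ᵥ x, ?_, ?_⟩
  · conv_lhs => rw [hA']
    rw [← mulVec_mulVec, ← mulVec_mulVec, dotProduct_mulVec, ← mulVec_transpose]
    simp only [dotProduct, mulVec_diagonal, Function.comp_apply, RCLike.ofReal_real_eq_id, id]
    exact Finset.sum_congr rfl fun i _ => by ring
  · rw [dotProduct_mulVec, ← mulVec_transpose, transpose_transpose, mulVec_mulVec, hU, one_mulVec]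

theorem IsHermitian.dotProduct_mulVec_le_iSup_eigenvalues_mul {A : Matrix n n ℝ}
    (hA : A.IsHermitian) (x : n → ℝ) : x ⬝ᵥ A *ᵥ x ≤ (⨆ i, hA.eigenvalues i) * (x ⬝ᵥ x) := by
  obtain ⟨y, hxy, hyy⟩ := hA.exists_dotProduct_mulVec_eq_sum_eigenvalues x
  rw [hxy, ← hyy, dotProduct, Finset.mul_sum]
  exact Finset.sum_le_sum fun i _ => mul_le_mul_of_nonneg_right
    (le_ciSup (Set.finite_range _).bddAbove i) (mul_self_nonneg _)

theorem IsHermitian.iInf_eigenvalues_mul_le_dotProduct_mulVec {A : Matrix n n ℝ}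
    (hA : A.IsHermitian) (x : n → ℝ) : (⨅ i, hA.eigenvalues i) * (x ⬝ᵥ x) ≤ x ⬝ᵥ A *ᵥ x := by
  obtain ⟨y, hxy, hyy⟩ := hA.exists_dotProduct_mulVec_eq_sum_eigenvalues x
  rw [hxy, ← hyy, dotProduct, Finset.mul_sum]
  exact Finset.sum_le_sum fun i _ => mul_le_mul_of_nonneg_right
    (ciInf_le (Set.finite_range _).bddBelow i) (mul_self_nonneg _)

theorem PosDef.dotProduct_sub_dotProduct_mulVec_le {D : Matrix n n ℝ} (hD : D.PosDef)
    (x y : n → ℝ) : x ⬝ᵥ y - x ⬝ᵥ D *ᵥ x ≤ (1 / 4) * (y ⬝ᵥ D⁻¹ *ᵥ y) := by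
  have hDT : Dᵀ = D := (isHermitian_iff_isSymm.mp hD.1).eq
  set z := D⁻¹ *ᵥ y
  have hDz : D *ᵥ z = y := by
    rw [mulVec_mulVec, mul_nonsing_inv _ (isUnit_iff_ne_zero.mpr hD.det_pos.ne'), one_mulVec]
  have hzDx : z ⬝ᵥ D *ᵥ x = x ⬝ᵥ y := by
    rw [dotProduct_mulVec, ← mulVec_transpose, hDT, hDz, dotProduct_comm]
  -- the square is completed at `x - D⁻¹ y / 2`
  have hsq := hD.posSemidef.dotProduct_mulVec_nonneg (x - (1 / 2 : ℝ) • z)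
  simp only [star_trivial, mulVec_sub, mulVec_smul, hDz, sub_dotProduct, dotProduct_sub,
    smul_dotProduct, dotProduct_smul, smul_eq_mul, hzDx, dotProduct_comm z y] at hsq
  linarith

theorem PosDef.dotProduct_sub_dotProduct_mulVec_le_iSup_eigenvalues_inv {D : Matrix n n ℝ}
    (hD : D.PosDef) (x y : n → ℝ) :
    x ⬝ᵥ y - x ⬝ᵥ D *ᵥ x ≤ (⨆ i, hD.inv.1.eigenvalues i) / 4 * (y ⬝ᵥ y) := by
  have := hD.inv.1.dotProduct_mulVec_le_iSup_eigenvalues_mul y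
  linarith [hD.dotProduct_sub_dotProduct_mulVec_le x y]

end Matrix

open MeasureTheory Set in
theorem le_add_setIntegral_Ioi_of_hasDerivAt_le {V V' g : ℝ → ℝ} {a t : ℝ}
    (hV : ∀ s, HasDerivAt V (V' s) s) (hle : ∀ s, V' s ≤ g s)
    (hg : IntegrableOn g (Ioi a)) (hg0 : ∀ s, 0 ≤ g s) (hat : a ≤ t) :
    V t ≤ V a + ∫ s in Ioi a, g s := by
  have hgIcc : IntegrableOn g (Icc a t) :=
    (integrableOn_Icc_iff_integrableOn_Ioc).mpr (hg.mono_set Ioc_subset_Ioi_self)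
  have hinc := intervalIntegral.sub_le_integral_of_hasDeriv_right_of_le hat
    (fun s _ => (hV s).continuousAt.continuousWithinAt) (fun s _ => (hV s).hasDerivWithinAt)
    hgIcc (fun s _ => hle s)
  have htail : ∫ s in a..t, g s ≤ ∫ s in Ioi a, g s := by
    rw [intervalIntegral.integral_of_le hat]
    exact setIntegral_mono_set hg (ae_of_all _ hg0)
      (.of_forall fun _ hs => Ioc_subset_Ioi_self hs)
  linarith

section ClosedLoop

noncomputable def srbStorage (Md : Matrix (Fin 6) (Fin 6) ℝ) (kp ko : ℝ) (v : ℝ → Fin 6 → ℝ)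
    (pe : ℝ → Fin 3 → ℝ) (ηe : ℝ → ℝ) (t : ℝ) : ℝ :=
  (1 / 2) * (v t ⬝ᵥ Md *ᵥ v t) + (1 / 2) * kp * (pe t ⬝ᵥ pe t) + 2 * ko * (1 - ηe t)

variable {Md Dd : Matrix (Fin 6) (Fin 6) ℝ} {kp ko kr : ℝ} {f : ℝ → ℝ} {Fh : ℝ → Fin 6 → ℝ}
  {p pg ω εe pdot : ℝ → Fin 3 → ℝ} {ηe : ℝ → ℝ} {Re : ℝ → Matrix (Fin 3) (Fin 3) ℝ}
  {v vdot : ℝ → Fin 6 → ℝ} {t : ℝ}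

theorem hasDerivAt_srbStorage (hMd : Md.IsHermitian) (hp : HasDerivAt p (pdot t) t)
    (hv : v t = Fin.append (pdot t) (ω t)) (hvdot : HasDerivAt v (vdot t) t)
    (hadm : Md *ᵥ vdot t + Dd *ᵥ v t =
      Fh t + Fin.append (kp • (pg t - p t)) (ko • (Re t)ᵀ *ᵥ εe t))
    (hpg : HasDerivAt pg ((-(kr * f t)) • (pg t - p t)) t)
    (hηe : HasDerivAt ηe (-(1 / 2) * (εe t ⬝ᵥ ((-(kr * f t)) • εe t - Re t *ᵥ ω t))) t) :
    HasDerivAt (srbStorage Md kp ko v (fun r => pg r - p r) ηe)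
      (v t ⬝ᵥ Fh t - v t ⬝ᵥ Dd *ᵥ v t -
        kr * f t * (kp * ((pg t - p t) ⬝ᵥ (pg t - p t)) + ko * (εe t ⬝ᵥ εe t))) t := by
  have hpe : HasDerivAt (fun r => pg r - p r) ((-(kr * f t)) • (pg t - p t) - pdot t) t :=
    hpg.sub hp
  have hV := (((hvdot.dotProduct (hvdot.mulVec Md)).const_mul (1 / 2)).add
    ((hpe.dotProduct hpe).const_mul ((1 / 2) * kp))).add
    (((hasDerivAt_const t 1).sub hηe).const_mul (2 * ko))
  refine hV.congr_deriv ?_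
  have hsym : vdot t ⬝ᵥ Md *ᵥ v t = v t ⬝ᵥ Md *ᵥ vdot t := by
    rw [dotProduct_mulVec, ← mulVec_transpose, (isHermitian_iff_isSymm.mp hMd).eq, dotProduct_comm]
  have hMvdot : v t ⬝ᵥ Md *ᵥ vdot t = v t ⬝ᵥ Fh t - v t ⬝ᵥ Dd *ᵥ v t +
      (kp * (pdot t ⬝ᵥ (pg t - p t)) + ko * (εe t ⬝ᵥ Re t *ᵥ ω t)) := by
    rw [eq_sub_of_add_eq hadm, dotProduct_sub, dotProduct_add, hv, Fin.append_dotProduct_append,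
      dotProduct_smul, dotProduct_smul, dotProduct_mulVec, vecMul_transpose,
      dotProduct_comm (Re t *ᵥ ω t)]
    simp only [smul_eq_mul]
    ring
  rw [hsym, hMvdot]
  generalize pg t - p t = pe
  simp only [sub_dotProduct, dotProduct_sub, smul_dotProduct, dotProduct_smul, smul_eq_mul,
    dotProduct_comm (pdot t)]
  ring

theorem srbStorage_le_bounds {pe : ℝ → Fin 3 → ℝ} {B : ℝ}
    (hMd : Md.PosDef) (hkp : 0 < kp) (hko : 0 < ko) (hηe : ηe t ≤ 1)
    (hV : srbStorage Md kp ko v pe ηe t ≤ B) :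
    v t ⬝ᵥ v t ≤ 2 * B / (⨅ i, hMd.1.eigenvalues i) ∧ pe t ⬝ᵥ pe t ≤ 2 * B / kp ∧
      1 - ηe t ≤ B / (2 * ko) := by
  obtain ⟨i, hi⟩ := exists_eq_ciInf_of_finite (f := hMd.1.eigenvalues)
  have hμ : 0 < ⨅ i, hMd.1.eigenvalues i := hi ▸ hMd.eigenvalues_pos i
  have hkin : 0 ≤ v t ⬝ᵥ Md *ᵥ v t := by
    simpa using hMd.posSemidef.dotProduct_mulVec_nonneg (v t)
  have hpot : 0 ≤ pe t ⬝ᵥ pe t := dotProduct_self_star_nonneg (pe t)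
  have hrot : 0 ≤ 1 - ηe t := sub_nonneg.mpr hηe
  unfold srbStorage at hV
  refine ⟨?_, ?_, ?_⟩
  · rw [le_div_iff₀ hμ]
    nlinarith [hMd.1.iInf_eigenvalues_mul_le_dotProduct_mulVec (v t)]
  · rw [le_div_iff₀ hkp]; nlinarith
  · rw [le_div_iff₀ (by positivity)]; nlinarith

end ClosedLoop

theorem storage_function_bounded_general
    (Md Dd : Matrix (Fin 6) (Fin 6) ℝ) (kp ko kr : ℝ) (f : ℝ → ℝ)
    (Fh : ℝ → Fin 6 → ℝ)
    (p pg ω εe pdot : ℝ → Fin 3 → ℝ) (ηe : ℝ → ℝ)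
    (Re : ℝ → Matrix (Fin 3) (Fin 3) ℝ)
    (v vdot : ℝ → Fin 6 → ℝ) (E : ℝ)
    (hMd : Md.PosDef) (hDd : Dd.PosDef)
    (hkp : 0 < kp) (hko : 0 < ko) (hkr : 0 < kr)
    (hf : ∀ t : ℝ, f t ∈ Set.Icc (0:ℝ) 1)
    -- `v = (ṗ, ω)`:
    (hp : ∀ t : ℝ, HasDerivAt p (pdot t) t)
    (hv : ∀ t : ℝ, v t = Fin.append (pdot t) (ω t))
    (hvdot : ∀ t : ℝ, HasDerivAt v (vdot t) t)
    -- (i) admittance model with `u_c = (k_p p_e, k_o R_eᵀ ε_e)`: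
    (hadm : ∀ t : ℝ,
      Md.mulVec (vdot t) + Dd.mulVec (v t) =
        Fh t + Fin.append (kp • (pg t - p t)) (ko • (Re t)ᵀ.mulVec (εe t)))
    -- (ii) god-object dynamics:
    (hpg : ∀ t : ℝ, HasDerivAt pg ((-(kr * f t)) • (pg t - p t)) t)
    -- (iii) quaternion-error kinematics, with `ω_g = −k_r f ε_e`:
    (hηe : ∀ t : ℝ, HasDerivAt ηe
      (-(1 / 2) * (εe t ⬝ᵥ ((-(kr * f t)) • εe t - (Re t).mulVec (ω t)))) t)
    -- unit-quaternion real part bound, so that `V ≥ 0`: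
    (hηe1 : ∀ t : ℝ, ηe t ≤ 1)
    -- bounded energy of the human force:
    (hFint : MeasureTheory.IntegrableOn (fun t : ℝ => Fh t ⬝ᵥ Fh t)
      (Set.Ioi (0:ℝ)))
    (hE : ∫ t in Set.Ioi (0:ℝ), (Fh t ⬝ᵥ Fh t) = E) :
    (∀ t : ℝ, 0 ≤ t →
        (1 / 2) * (v t ⬝ᵥ Md.mulVec (v t)) +
            (1 / 2) * kp * ((pg t - p t) ⬝ᵥ (pg t - p t)) +
            2 * ko * (1 - ηe t) ≤
          ((1 / 2) * (v 0 ⬝ᵥ Md.mulVec (v 0)) +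
              (1 / 2) * kp * ((pg 0 - p 0) ⬝ᵥ (pg 0 - p 0)) +
              2 * ko * (1 - ηe 0)) +
            ((⨆ i, hDd.inv.1.eigenvalues i) / 4) * E) ∧
      ∃ C : ℝ, ∀ t : ℝ, 0 ≤ t →
        v t ⬝ᵥ v t ≤ C ∧ (pg t - p t) ⬝ᵥ (pg t - p t) ≤ C ∧
          1 - ηe t ≤ C := by
  set V := srbStorage Md kp ko v (fun r => pg r - p r) ηe
  set L := ⨆ i, hDd.inv.1.eigenvalues i
  have hL : 0 ≤ L := by
    obtain ⟨i, hi⟩ := exists_eq_ciSup_of_finite (f := hDd.inv.1.eigenvalues)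
    exact (hDd.inv.eigenvalues_pos i).le.trans_eq hi
  have hdiss : ∀ s, v s ⬝ᵥ Fh s - v s ⬝ᵥ Dd *ᵥ v s -
      kr * f s * (kp * ((pg s - p s) ⬝ᵥ (pg s - p s)) + ko * (εe s ⬝ᵥ εe s)) ≤
      L / 4 * (Fh s ⬝ᵥ Fh s) := fun s => by
    have hfs := (hf s).1
    have hpe := dotProduct_self_star_nonneg (pg s - p s)
    have hεe := dotProduct_self_star_nonneg (εe s)
    have hdamp :
        0 ≤ kr * f s * (kp * ((pg s - p s) ⬝ᵥ (pg s - p s)) + ko * (εe s ⬝ᵥ εe s)) := by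
      positivity
    linarith [hDd.dotProduct_sub_dotProduct_mulVec_le_iSup_eigenvalues_inv (v s) (Fh s)]
  have hbound : ∀ t, 0 ≤ t → V t ≤ V 0 + L / 4 * E := fun t ht => by
    have := le_add_setIntegral_Ioi_of_hasDerivAt_le
      (fun s => hasDerivAt_srbStorage hMd.1 (hp s) (hv s) (hvdot s) (hadm s) (hpg s) (hηe s))
      hdiss (hFint.const_mul _)
      (fun s => mul_nonneg (by positivity) (dotProduct_self_star_nonneg _)) ht
    rwa [MeasureTheory.integral_const_mul, hE] at this
  set B := V 0 + L / 4 * E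
  refine ⟨hbound, max (2 * B / ⨅ i, hMd.1.eigenvalues i) (max (2 * B / kp) (B / (2 * ko))),
    fun t ht => ?_⟩
  obtain ⟨hv, hpe, hη⟩ := srbStorage_le_bounds hMd hkp hko (hηe1 t) (hbound t ht)
  exact ⟨hv.trans (le_max_left _ _), hpe.trans ((le_max_left _ _).trans (le_max_right _ _)),
    hη.trans ((le_max_right _ _).trans (le_max_right _ _))⟩

/-- for the closed-loop SRB system with storage function
`V = (1/2) vᵀ M_d v + (1/2) k_p ‖p_e‖² + 2 k_o (1 − η_e)`, if additionally
`η_e(t) ≤ 1` for all `t` (so `V ≥ 0`) and the human force has bounded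
energy `∫₀^∞ ‖F_h‖² dt = E < ∞`, then for all `t ≥ 0`,
`V(t) ≤ V(0) + (λ_max(D_d⁻¹)/4) E`; consequently `‖v‖`, `‖p_e‖` and
`1 − η_e` are uniformly bounded on `[0, ∞)` (Theorem 1, statement 2).
Squared Euclidean norms are written via dot products and `v = (ṗ, ω)`. -/
theorem storage_function_bounded
    (Md Dd : Matrix (Fin 6) (Fin 6) ℝ) (kp ko kr : ℝ) (f : ℝ → ℝ)
    (Fh : ℝ → Fin 6 → ℝ)
    (p pg ω εe pdot : ℝ → Fin 3 → ℝ) (ηe : ℝ → ℝ)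
    (Re : ℝ → Matrix (Fin 3) (Fin 3) ℝ)
    (v vdot : ℝ → Fin 6 → ℝ) (E : ℝ)
    (hMd : Md.PosDef) (hDd : Dd.PosDef)
    (hkp : 0 < kp) (hko : 0 < ko) (hkr : 0 < kr)
    (hf : ∀ t : ℝ, f t ∈ Set.Icc (0:ℝ) 1)
    (hRe : ∀ t : ℝ, (Re t)ᵀ * Re t = 1)
    (hRedet : ∀ t : ℝ, (Re t).det = 1)
    -- `v = (ṗ, ω)`:
    (hp : ∀ t : ℝ, HasDerivAt p (pdot t) t)
    (hv : ∀ t : ℝ, v t = Fin.append (pdot t) (ω t))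
    (hvdot : ∀ t : ℝ, HasDerivAt v (vdot t) t)
    -- (i) admittance model with `u_c = (k_p p_e, k_o R_eᵀ ε_e)`:
    (hadm : ∀ t : ℝ,
      Md.mulVec (vdot t) + Dd.mulVec (v t) =
        Fh t + Fin.append (kp • (pg t - p t)) (ko • (Re t)ᵀ.mulVec (εe t)))
    -- (ii) god-object dynamics:
    (hpg : ∀ t : ℝ, HasDerivAt pg ((-(kr * f t)) • (pg t - p t)) t)
    -- (iii) quaternion-error kinematics, with `ω_g = −k_r f ε_e`:
    (hηe : ∀ t : ℝ, HasDerivAt ηe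
      (-(1 / 2) * (εe t ⬝ᵥ ((-(kr * f t)) • εe t - (Re t).mulVec (ω t)))) t)
    -- unit-quaternion real part bound, so that `V ≥ 0`:
    (hηe1 : ∀ t : ℝ, ηe t ≤ 1)
    -- bounded energy of the human force:
    (hFint : MeasureTheory.IntegrableOn (fun t : ℝ => Fh t ⬝ᵥ Fh t)
      (Set.Ioi (0:ℝ)))
    (hE : ∫ t in Set.Ioi (0:ℝ), (Fh t ⬝ᵥ Fh t) = E) :
    (∀ t : ℝ, 0 ≤ t →
        (1 / 2) * (v t ⬝ᵥ Md.mulVec (v t)) +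
            (1 / 2) * kp * ((pg t - p t) ⬝ᵥ (pg t - p t)) +
            2 * ko * (1 - ηe t) ≤
          ((1 / 2) * (v 0 ⬝ᵥ Md.mulVec (v 0)) +
              (1 / 2) * kp * ((pg 0 - p 0) ⬝ᵥ (pg 0 - p 0)) +
              2 * ko * (1 - ηe 0)) +
            ((⨆ i, hDd.inv.1.eigenvalues i) / 4) * E) ∧
      ∃ C : ℝ, ∀ t : ℝ, 0 ≤ t →
        v t ⬝ᵥ v t ≤ C ∧ (pg t - p t) ⬝ᵥ (pg t - p t) ≤ C ∧
          1 - ηe t ≤ C :=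
  storage_function_bounded_general Md Dd kp ko kr f Fh p pg ω εe pdot ηe Re v vdot E hMd hDd hkp hko
    hkr hf hp hv hvdot hadm hpg hηe hηe1 hFint hE
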